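/- Let X be a real diagonal n×n matrix, O_X := convexHull{g X gᵀ : g ∈ O(n)}, Π_X := convexHull{σ·X : σ ∈ S_n}, and P the linear map on n×n real matrices that sets all off-diagonal entries to zero. Let f be a face of Π_X and σ ∈ S_n; write σ·f := {σ·D : D ∈ f}. Set F := P⁻¹(f) ∩ O_X and F' := P⁻¹(σ·f) ∩ O_X. Then there exists k ∈ O(n) such that F' = {k Y kᵀ : Y ∈ F}. -/

import Mathlib

/-! Conjugation by the permutation matrix of `σ⁻¹` is the action `A ↦ σ·A`. It commutes with
taking the diagonal part, and it preserves `O_X` because permutation matrices are orthogonal, so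
it maps `P⁻¹(f) ∩ O_X` bijectively onto `P⁻¹(σ·f) ∩ O_X`. -/

open Matrix

/-- The linear operation on `n × n` real matrices that sets all off-diagonal entries to zero
(orthogonal projection onto the subspace of diagonal matrices). -/
def diagPart {n : ℕ} (A : Matrix (Fin n) (Fin n) ℝ) : Matrix (Fin n) (Fin n) ℝ :=
  Matrix.diagonal (fun i => A i i)

/-- The action of a permutation `σ` on matrices: `(σ · A) i j = A (σ⁻¹ i) (σ⁻¹ j)`.
On a diagonal matrix this makes the `i`-th diagonal entry the `σ⁻¹ i`-th one of `A`. -/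
def permAct {n : ℕ} (σ : Equiv.Perm (Fin n)) (A : Matrix (Fin n) (Fin n) ℝ) :
    Matrix (Fin n) (Fin n) ℝ :=
  A.submatrix ⇑σ⁻¹ ⇑σ⁻¹

theorem Function.Semiconj.image_preimage {α β : Type*} {p : α → β} {e : α ≃ α} {e' : β ≃ β}
    (h : Function.Semiconj p e e') (s : Set β) : e '' (p ⁻¹' s) = p ⁻¹' (e' '' s) := by
  rw [e.image_eq_preimage_symm, e'.image_eq_preimage_symm, ← Set.preimage_comp,
    ← Set.preimage_comp]
  exact congrArg (· ⁻¹' s) (funext (h.inverses_right e.right_inv e'.left_inv))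

namespace Matrix

variable {ι : Type*} [Fintype ι] [DecidableEq ι]

theorem permMatrix_mem_orthogonalGroup (σ : Equiv.Perm ι) :
    σ.permMatrix ℝ ∈ orthogonalGroup ι ℝ := by
  rw [mem_orthogonalGroup_iff, transpose_permMatrix, ← permMatrix_mul, inv_mul_cancel,
    permMatrix_one]

theorem conj_mem_convexHull_orthogonal_orbit (X : Matrix ι ι ℝ) {k : Matrix ι ι ℝ}
    (hk : k ∈ orthogonalGroup ι ℝ) {Y : Matrix ι ι ℝ}
    (hY : Y ∈ convexHull ℝ {m | ∃ g ∈ orthogonalGroup ι ℝ, m = g * X * gᵀ}) :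
    k * Y * kᵀ ∈ convexHull ℝ {m | ∃ g ∈ orthogonalGroup ι ℝ, m = g * X * gᵀ} := by
  set conj := (LinearMap.mulLeft ℝ k).comp (LinearMap.mulRight ℝ kᵀ)
  have hconj : conj Y = k * Y * kᵀ := (Matrix.mul_assoc _ _ _).symm
  have horbit : conj '' {m | ∃ g ∈ orthogonalGroup ι ℝ, m = g * X * gᵀ} ⊆
      {m | ∃ g ∈ orthogonalGroup ι ℝ, m = g * X * gᵀ} := by
    rintro _ ⟨_, ⟨g, hg, rfl⟩, rfl⟩
    exact ⟨k * g, mul_mem hk hg, by simp [conj, transpose_mul, Matrix.mul_assoc]⟩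
  rw [← hconj]
  exact convexHull_mono horbit (conj.image_convexHull _ ▸ Set.mem_image_of_mem conj hY)

end Matrix

section

variable {n : ℕ}

theorem permAct_eq_reindex (σ : Equiv.Perm (Fin n)) : permAct σ = reindex σ σ := rfl

theorem permAct_eq_conj (σ : Equiv.Perm (Fin n)) (A : Matrix (Fin n) (Fin n) ℝ) :
    permAct σ A = σ⁻¹.permMatrix ℝ * A * (σ⁻¹.permMatrix ℝ)ᵀ := by
  rw [transpose_permMatrix, PEquiv.toMatrix_toPEquiv_mul, PEquiv.mul_toMatrix_toPEquiv]
  rfl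

theorem diagPart_permAct (σ : Equiv.Perm (Fin n)) (A : Matrix (Fin n) (Fin n) ℝ) :
    diagPart (permAct σ A) = permAct σ (diagPart A) :=
  (submatrix_diagonal_equiv (fun i => A i i) σ⁻¹).symm

theorem image_permAct_convexHull_orthogonal_orbit (σ : Equiv.Perm (Fin n))
    (X : Matrix (Fin n) (Fin n) ℝ) :
    permAct σ '' convexHull ℝ {m | ∃ g ∈ orthogonalGroup (Fin n) ℝ, m = g * X * gᵀ} =
      convexHull ℝ {m | ∃ g ∈ orthogonalGroup (Fin n) ℝ, m = g * X * gᵀ} := by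
  refine (Set.image_subset_iff.2 fun Y hY => ?_).antisymm fun Y hY => ⟨permAct σ⁻¹ Y, ?_, ?_⟩
  · rw [Set.mem_preimage, permAct_eq_conj]
    exact conj_mem_convexHull_orthogonal_orbit X (permMatrix_mem_orthogonalGroup _) hY
  · rw [permAct_eq_conj]
    exact conj_mem_convexHull_orthogonal_orbit X (permMatrix_mem_orthogonalGroup _) hY
  · exact (reindex σ σ).apply_symm_apply Y

end

theorem exists_conj_of_perm_face_general
    {n : ℕ} (d : Fin n → ℝ)
    (f : Set (Matrix (Fin n) (Fin n) ℝ))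
    (σ : Equiv.Perm (Fin n)) :
    ∃ k ∈ Matrix.orthogonalGroup (Fin n) ℝ,
      diagPart ⁻¹' (permAct σ '' f) ∩
          convexHull ℝ {m : Matrix (Fin n) (Fin n) ℝ |
            ∃ g ∈ Matrix.orthogonalGroup (Fin n) ℝ, m = g * Matrix.diagonal d * gᵀ} =
        (fun Y => k * Y * kᵀ) ''
          (diagPart ⁻¹' f ∩ convexHull ℝ {m : Matrix (Fin n) (Fin n) ℝ |
            ∃ g ∈ Matrix.orthogonalGroup (Fin n) ℝ, m = g * Matrix.diagonal d * gᵀ}) := by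
  refine ⟨σ⁻¹.permMatrix ℝ, permMatrix_mem_orthogonalGroup _, ?_⟩
  have hconj : (fun Y => σ⁻¹.permMatrix ℝ * Y * (σ⁻¹.permMatrix ℝ)ᵀ) = permAct σ :=
    funext fun Y => (permAct_eq_conj σ Y).symm
  have hsemiconj : Function.Semiconj diagPart (reindex σ σ) (reindex σ σ) :=
    diagPart_permAct σ
  rw [hconj, permAct_eq_reindex, Set.image_inter (reindex σ σ).injective,
    hsemiconj.image_preimage, ← permAct_eq_reindex, image_permAct_convexHull_orthogonal_orbit]

/-- for `X = diagonal d`, `O_X = convexHull {g X gᵀ : g ∈ O(n)}` and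
`Π_X = convexHull {σ·X : σ ∈ S_n}`, let `f` be a face of `Π_X` and `σ ∈ S_n`. With
`F := P⁻¹(f) ∩ O_X` and `F' := P⁻¹(σ·f) ∩ O_X`, there exists `k ∈ O(n)` such that
`F' = {k Y kᵀ : Y ∈ F}`. -/
theorem exists_conj_of_perm_face
    {n : ℕ} (d : Fin n → ℝ)
    (f : Set (Matrix (Fin n) (Fin n) ℝ)) (hfconv : Convex ℝ f)
    (hf : IsExtreme ℝ (convexHull ℝ {m : Matrix (Fin n) (Fin n) ℝ |
        ∃ σ : Equiv.Perm (Fin n), m = Matrix.diagonal (fun i => d (σ⁻¹ i))}) f)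
    (σ : Equiv.Perm (Fin n)) :
    ∃ k ∈ Matrix.orthogonalGroup (Fin n) ℝ,
      diagPart ⁻¹' (permAct σ '' f) ∩
          convexHull ℝ {m : Matrix (Fin n) (Fin n) ℝ |
            ∃ g ∈ Matrix.orthogonalGroup (Fin n) ℝ, m = g * Matrix.diagonal d * gᵀ} =
        (fun Y => k * Y * kᵀ) ''
          (diagPart ⁻¹' f ∩ convexHull ℝ {m : Matrix (Fin n) (Fin n) ℝ |
            ∃ g ∈ Matrix.orthogonalGroup (Fin n) ℝ, m = g * Matrix.diagonal d * gᵀ}) :=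
  exists_conj_of_perm_face_general d f σ
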